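/- Let P ⊆ ℝ^d be a full-dimensional lattice polytope and let v_1, ..., v_k ∈ (ℤ^d)* be Fine core normals of P. Let λ_1, ..., λ_k ≥ 0 with λ_1 + ... + λ_k ≤ 1, and suppose v := λ_1 v_1 + ... + λ_k v_k lies in (ℤ^d)* and v ≠ 0. Then v is also a Fine core normal of P. -/

import Mathlib

open Set

noncomputable section

/-- The pairing `⟨a, x⟩ = ∑ i, a i * x i` of an integer linear functional with a point. -/
def pair {d : ℕ} (a : Fin d → ℤ) (x : Fin d → ℝ) : ℝ := ∑ i, (a i : ℝ) * x i

/-- The support function `h_P(a) = min_{x ∈ P} ⟨a, x⟩`. -/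
def suppFn {d : ℕ} (P : Set (Fin d → ℝ)) (a : Fin d → ℤ) : ℝ := sInf (pair a '' P)

/-- The Fine adjoint polytope `P^{F(s)}`. -/
def fineAdjoint {d : ℕ} (P : Set (Fin d → ℝ)) (s : ℝ) : Set (Fin d → ℝ) :=
  {x | ∀ a : Fin d → ℤ, a ≠ 0 → suppFn P a + s ≤ pair a x}

/-- The Fine number `n^F(P) = sup {s > 0 : P^{F(s)} ≠ ∅}`. -/
def fineNumber {d : ℕ} (P : Set (Fin d → ℝ)) : ℝ :=
  sSup {s : ℝ | 0 < s ∧ (fineAdjoint P s).Nonempty}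

/-- The Fine ℚ-codegree `μ^F(P) = (n^F(P))⁻¹`. -/
def fineCodeg {d : ℕ} (P : Set (Fin d → ℝ)) : ℝ := (fineNumber P)⁻¹

/-- The Fine core `core^F(P) = P^{F(n^F(P))}`. -/
def fineCore {d : ℕ} (P : Set (Fin d → ℝ)) : Set (Fin d → ℝ) := fineAdjoint P (fineNumber P)

/-- A rational polytope: the convex hull of finitely many rational points. -/
def IsRationalPolytope {d : ℕ} (P : Set (Fin d → ℝ)) : Prop :=
  ∃ V : Finset (Fin d → ℝ), V.Nonempty ∧ (∀ v ∈ V, ∀ i, ∃ q : ℚ, v i = (q : ℝ)) ∧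
    P = convexHull ℝ (V : Set (Fin d → ℝ))

/-- A lattice polytope: the convex hull of finitely many integer points. -/
def IsLatticePolytope {d : ℕ} (P : Set (Fin d → ℝ)) : Prop :=
  ∃ V : Finset (Fin d → ℝ), V.Nonempty ∧ (∀ v ∈ V, ∀ i, ∃ n : ℤ, v i = (n : ℝ)) ∧
    P = convexHull ℝ (V : Set (Fin d → ℝ))

/-- Full-dimensional: the affine hull is all of `ℝ^d`. -/
def IsFullDim {d : ℕ} (P : Set (Fin d → ℝ)) : Prop := affineSpan ℝ P = ⊤

/-- A nonzero integer functional `a` is a Fine core normal of `P` if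
`⟨a, y⟩ = h_P(a) + n^F(P)` for every `y` in the Fine core of `P`. -/
def IsFineCoreNormal {d : ℕ} (P : Set (Fin d → ℝ)) (a : Fin d → ℤ) : Prop :=
  a ≠ 0 ∧ ∀ y ∈ fineCore P, pair a y = suppFn P a + fineNumber P

/-- The set of integer points of `ℝ^k`. -/
def intPts (k : ℕ) : Set (Fin k → ℝ) := {x | ∀ i, ∃ n : ℤ, x i = (n : ℝ)}

/-- The Fine spectrum in dimension `k`. -/
def fineSpec (k : ℕ) : Set ℝ :=
  {r | ∃ P : Set (Fin k → ℝ), IsLatticePolytope P ∧ IsFullDim P ∧ r = fineCodeg P}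

/-- Unimodular equivalence of subsets of `ℝ^k`. -/
def UnimodEquiv {k : ℕ} (P Q : Set (Fin k → ℝ)) : Prop :=
  ∃ U : Matrix (Fin k) (Fin k) ℤ, IsUnit U.det ∧ ∃ v : Fin k → ℤ,
    P = (fun x => fun i => (∑ j, (U i j : ℝ) * x j) + (v i : ℝ)) '' Q

/-- The standard simplex `Δ_k = conv{0, e_1, ..., e_k}`. -/
def stdSimp (k : ℕ) : Set (Fin k → ℝ) :=
  convexHull ℝ (insert (0 : Fin k → ℝ) (Set.range fun i => Pi.single i (1 : ℝ)))

/-- The lattice pyramid `Pyr(Q) = conv((Q × {1}) ∪ {0})`. -/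
def pyrSet {k : ℕ} (Q : Set (Fin k → ℝ)) : Set (Fin (k + 1) → ℝ) :=
  convexHull ℝ (((fun x => Fin.snoc x (1 : ℝ)) '' Q) ∪ {0})

/-- Twice the standard triangle, `2Δ₂ = conv{(0,0),(2,0),(0,2)}`. -/
def twoDelta2 : Set (Fin 2 → ℝ) :=
  convexHull ℝ ({![0, 0], ![2, 0], ![0, 2]} : Set (Fin 2 → ℝ))

/-- The `m`-fold iterated lattice pyramid over `2Δ₂`. -/
def iterPyr : (m : ℕ) → Set (Fin (2 + m) → ℝ)
  | 0 => twoDelta2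
  | m + 1 => pyrSet (iterPyr m)

end

/-! The support function is concave in the functional, while pairing with a fixed point is
linear. Hence for `y` in the Fine core, `⟨w, y⟩ = ∑ λᵢ (h_P(vᵢ) + n) ≤ h_P(w) + (∑ λᵢ) n ≤ h_P(w) + n`,
and the reverse inequality is the defining inequality of the core for the functional `w`. -/

lemma continuous_pair {d : ℕ} (a : Fin d → ℤ) : Continuous (pair a) :=
  continuous_finsetSum _ fun i _ => continuous_const.mul (continuous_apply i)

lemma IsLatticePolytope.nonempty {d : ℕ} {P : Set (Fin d → ℝ)} (hP : IsLatticePolytope P) :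
    P.Nonempty := by
  obtain ⟨V, hV, -, rfl⟩ := hP
  exact convexHull_nonempty_iff.mpr (Finset.coe_nonempty.mpr hV)

lemma IsLatticePolytope.isCompact {d : ℕ} {P : Set (Fin d → ℝ)} (hP : IsLatticePolytope P) :
    IsCompact P := by
  obtain ⟨V, -, -, rfl⟩ := hP
  exact V.finite_toSet.isCompact_convexHull ℝ

lemma suppFn_le_pair {d : ℕ} {P : Set (Fin d → ℝ)} (hP : IsCompact P) (a : Fin d → ℤ)
    {x : Fin d → ℝ} (hx : x ∈ P) : suppFn P a ≤ pair a x :=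
  csInf_le (hP.image (continuous_pair a)).bddBelow ⟨x, hx, rfl⟩

lemma fineNumber_nonneg {d : ℕ} (P : Set (Fin d → ℝ)) : 0 ≤ fineNumber P :=
  Real.sSup_nonneg fun _ hs => hs.1.le

section Combination

variable {d k : ℕ} {v : Fin k → Fin d → ℤ} {lam : Fin k → ℝ} {w : Fin d → ℤ}

lemma pair_eq_sum_of_combination (hw : ∀ j, (w j : ℝ) = ∑ i, lam i * (v i j : ℝ))
    (x : Fin d → ℝ) : pair w x = ∑ i, lam i * pair (v i) x := by
  simp only [pair, hw, Finset.sum_mul, Finset.mul_sum, mul_assoc]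
  exact Finset.sum_comm

lemma sum_mul_suppFn_le_suppFn {P : Set (Fin d → ℝ)} (hne : P.Nonempty) (hc : IsCompact P)
    (hlam : ∀ i, 0 ≤ lam i) (hw : ∀ j, (w j : ℝ) = ∑ i, lam i * (v i j : ℝ)) :
    ∑ i, lam i * suppFn P (v i) ≤ suppFn P w := by
  refine le_csInf (hne.image _) ?_
  rintro _ ⟨x, hx, rfl⟩
  rw [pair_eq_sum_of_combination hw]
  exact Finset.sum_le_sum fun i _ =>
    mul_le_mul_of_nonneg_left (suppFn_le_pair hc (v i) hx) (hlam i)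

end Combination

theorem stmt_7_general {d : ℕ} (P : Set (Fin d → ℝ)) (hP : IsLatticePolytope P)
    (k : ℕ) (v : Fin k → Fin d → ℤ) (hv : ∀ i, IsFineCoreNormal P (v i))
    (lam : Fin k → ℝ) (hlam : ∀ i, 0 ≤ lam i) (hsum : ∑ i, lam i ≤ 1)
    (w : Fin d → ℤ) (hw : ∀ j, (w j : ℝ) = ∑ i, lam i * (v i j : ℝ)) (hw0 : w ≠ 0) :
    IsFineCoreNormal P w := by
  refine ⟨hw0, fun y hy => le_antisymm ?_ (hy w hw0)⟩
  calc pair w y = ∑ i, lam i * (suppFn P (v i) + fineNumber P) := by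
        rw [pair_eq_sum_of_combination hw]
        exact Finset.sum_congr rfl fun i _ => by rw [(hv i).2 y hy]
    _ = ∑ i, lam i * suppFn P (v i) + (∑ i, lam i) * fineNumber P := by
        simp only [mul_add, Finset.sum_add_distrib, Finset.sum_mul]
    _ ≤ suppFn P w + fineNumber P :=
        add_le_add (sum_mul_suppFn_le_suppFn hP.nonempty hP.isCompact hlam hw)
          (mul_le_of_le_one_left (fineNumber_nonneg P) hsum)

/-- a subconvex integer combination of Fine core normals is again a
Fine core normal. -/
theorem stmt_7 {d : ℕ} (P : Set (Fin d → ℝ)) (hP : IsLatticePolytope P) (hfull : IsFullDim P)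
    (k : ℕ) (v : Fin k → Fin d → ℤ) (hv : ∀ i, IsFineCoreNormal P (v i))
    (lam : Fin k → ℝ) (hlam : ∀ i, 0 ≤ lam i) (hsum : ∑ i, lam i ≤ 1)
    (w : Fin d → ℤ) (hw : ∀ j, (w j : ℝ) = ∑ i, lam i * (v i j : ℝ)) (hw0 : w ≠ 0) :
    IsFineCoreNormal P w :=
  stmt_7_general P hP k v hv lam hlam hsum w hw hw0
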